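/- arXiv:1001.0482 — 4 statements merged into one kernel-verified Lean document; each statement's English description precedes it below -/
import Mathlib

section
/- Let (Ē, [[·,·]], ρ) be a skew-symmetric algebroid over Q and F : Ē → Ē a vector bundle homomorphism over the identity of Q. Define on E = ℝ × Ē the bracket [[(f,σ),(g,γ)]] = (ρ(σ)(g) − ρ(γ)(f), [[σ,γ]] + g F(σ) − f F(γ)) and anchor ρ_E(f,σ) = ρ(σ), where sections of E are identified with pairs (f,σ) ∈ C^∞(Q) × Γ(Ē). Then ([[·,·]]_E, ρ_E) is a skew-symmetric algebroid structure on E, i.e., the bracket is skew-symmetric, ℝ-bilinear, and satisfies the Leibniz rule with respect to ρ_E. -/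
/-!
Every axiom is checked componentwise. Skew-symmetry and left additivity are immediate;
left `ℝ`-homogeneity holds because `ρ` and `F` are `C^∞(Q)`-linear, hence `ℝ`-linear, and
`ρ(σ)` is an `ℝ`-linear derivation. The Leibniz rule comes from the Leibniz rules of `[[·,·]]`
and of the derivation `ρ(σ)` together with `C^∞(Q)`-linearity of `ρ` and `F`. Right additivity
and homogeneity then follow from the left ones by skew-symmetry.
-/

section SkewBracket

variable {M N : Type*} [AddCommGroup N] {b : M → M → N}

theorem map_add_right_of_skew [Add M] (hskew : ∀ x y, b x y = -b y x)
    (hadd : ∀ x₁ x₂ y, b (x₁ + x₂) y = b x₁ y + b x₂ y) (x y₁ y₂ : M) :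
    b x (y₁ + y₂) = b x y₁ + b x y₂ := by
  rw [hskew, hadd, neg_add, ← hskew, ← hskew]

theorem map_smul_right_of_skew {S : Type*} [Monoid S] [SMul S M] [DistribMulAction S N]
    (hskew : ∀ x y, b x y = -b y x) (hsmul : ∀ (c : S) x y, b (c • x) y = c • b x y)
    (c : S) (x y : M) : b x (c • y) = c • b x y := by
  rw [hskew, hsmul, ← smul_neg, ← hskew]

end SkewBracket

section ProdBracket

variable {k R E : Type*} [CommRing k] [CommRing R] [Algebra k R]
  [AddCommGroup E] [Module R E]
  (bracket : E → E → E) (anchor : E →ₗ[R] Derivation k R R) (F : E →ₗ[R] E)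

def prodBracket (s t : R × E) : R × E :=
  (anchor s.2 t.1 - anchor t.2 s.1, bracket s.2 t.2 + t.1 • F s.2 - s.1 • F t.2)

variable {bracket anchor F}

theorem prodBracket_skew (hskew : ∀ σ γ : E, bracket σ γ = -bracket γ σ) (s t : R × E) :
    prodBracket bracket anchor F s t = -prodBracket bracket anchor F t s := by
  ext
  · simp only [prodBracket, Prod.fst_neg, neg_sub]
  · simp only [prodBracket, Prod.snd_neg, hskew s.2 t.2]
    abel

theorem prodBracket_add_left
    (hadd_left : ∀ σ₁ σ₂ γ : E, bracket (σ₁ + σ₂) γ = bracket σ₁ γ + bracket σ₂ γ)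
    (s₁ s₂ t : R × E) :
    prodBracket bracket anchor F (s₁ + s₂) t =
      prodBracket bracket anchor F s₁ t + prodBracket bracket anchor F s₂ t := by
  ext
  · simp only [prodBracket, Prod.fst_add, Prod.snd_add, map_add, Derivation.add_apply]
    abel
  · simp only [prodBracket, Prod.fst_add, Prod.snd_add, hadd_left, map_add, smul_add, add_smul]
    abel

theorem prodBracket_smul_left [Module k E] [IsScalarTower k R E]
    (hsmul_left : ∀ (c : k) (σ γ : E), bracket (c • σ) γ = c • bracket σ γ)
    (c : k) (s t : R × E) :
    prodBracket bracket anchor F (c • s) t = c • prodBracket bracket anchor F s t := by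
  ext
  · simp only [prodBracket, Prod.smul_fst, Prod.smul_snd, anchor.map_smul_of_tower,
      Derivation.smul_apply, Derivation.map_smul, smul_sub]
  · simp only [prodBracket, Prod.smul_fst, Prod.smul_snd, hsmul_left, F.map_smul_of_tower,
      smul_sub, smul_add, smul_comm t.1 c, smul_assoc]

theorem prodBracket_leibniz
    (hleibniz : ∀ (σ γ : E) (f : R), bracket σ (f • γ) = f • bracket σ γ + anchor σ f • γ)
    (s t : R × E) (f : R) :
    prodBracket bracket anchor F s (f • t) =
      f • prodBracket bracket anchor F s t + anchor s.2 f • t := by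
  ext
  · simp only [prodBracket, Prod.smul_fst, Prod.smul_snd, Prod.fst_add, smul_eq_mul,
      Derivation.leibniz, map_smul, Derivation.smul_apply]
    ring
  · simp only [prodBracket, Prod.smul_fst, Prod.smul_snd, Prod.snd_add, smul_eq_mul,
      hleibniz, map_smul, smul_add, smul_sub, mul_smul, smul_comm s.1 f]
    abel

end ProdBracket

/-- Given a skew-symmetric algebroid `Ē` (algebraic model: `R = C^∞(Q)`,
`Ebar = Γ(Ē)`, anchor into derivations of `R`) and a bundle homomorphism `F : Ē → Ē`
(an `R`-linear map on sections), the bracket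
`[[(f,σ),(g,γ)]] = (ρ(σ)(g) − ρ(γ)(f), [[σ,γ]] + g•F(σ) − f•F(γ))` and anchor
`ρ_E(f,σ) = ρ(σ)` define a skew-symmetric algebroid structure on `E = ℝ × Ē`
(sections `R × Γ(Ē)`): the bracket is skew-symmetric, ℝ-bilinear and satisfies the
Leibniz rule with respect to `ρ_E`. -/
theorem prod_skew_algebroid
    {R : Type*} [CommRing R] [Algebra ℝ R]
    {Ebar : Type*} [AddCommGroup Ebar] [Module ℝ Ebar] [Module R Ebar]
    [IsScalarTower ℝ R Ebar]
    (bracket : Ebar → Ebar → Ebar) (anchor : Ebar →ₗ[R] Derivation ℝ R R)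
    (F : Ebar →ₗ[R] Ebar)
    (hadd_left : ∀ σ₁ σ₂ γ : Ebar, bracket (σ₁ + σ₂) γ = bracket σ₁ γ + bracket σ₂ γ)
    (hsmul_left : ∀ (c : ℝ) (σ γ : Ebar), bracket (c • σ) γ = c • bracket σ γ)
    (hskew : ∀ σ γ : Ebar, bracket σ γ = - bracket γ σ)
    (hleibniz : ∀ (σ γ : Ebar) (f : R),
      bracket σ (f • γ) = f • bracket σ γ + anchor σ f • γ) :
    -- the induced bracket on `Γ(ℝ × Ē) = R × Γ(Ē)`
    ∀ Lb : (R × Ebar) → (R × Ebar) → (R × Ebar),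
      (Lb = fun s t =>
          (anchor s.2 t.1 - anchor t.2 s.1,
            bracket s.2 t.2 + t.1 • F s.2 - s.1 • F t.2)) →
      -- skew-symmetry
      ((∀ s t : R × Ebar, Lb s t = - Lb t s) ∧
      -- ℝ-bilinearity
      (∀ s₁ s₂ t : R × Ebar, Lb (s₁ + s₂) t = Lb s₁ t + Lb s₂ t) ∧
      (∀ (c : ℝ) (s t : R × Ebar), Lb (c • s) t = c • Lb s t) ∧
      (∀ s t₁ t₂ : R × Ebar, Lb s (t₁ + t₂) = Lb s t₁ + Lb s t₂) ∧
      (∀ (c : ℝ) (s t : R × Ebar), Lb s (c • t) = c • Lb s t) ∧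
      -- Leibniz rule with respect to the anchor `ρ_E(f,σ) = ρ(σ)`
      (∀ (s t : R × Ebar) (f : R), Lb s (f • t) = f • Lb s t + anchor s.2 f • t)) := by
  rintro Lb rfl
  have skew := prodBracket_skew (anchor := anchor) (F := F) hskew
  have add_left := prodBracket_add_left (anchor := anchor) (F := F) hadd_left
  have smul_left := prodBracket_smul_left (anchor := anchor) (F := F) hsmul_left
  exact ⟨skew, add_left, smul_left, map_add_right_of_skew skew add_left,
    map_smul_right_of_skew skew smul_left, prodBracket_leibniz hleibniz⟩
end

section
/- Let (E, [[·,·]], ρ, φ) be a skew-symmetric algebroid over Q of rank n with a section φ ∈ Γ(E*) satisfying d^E φ = 0 and φ_q ≠ 0 for all q. Let V = ker(φ̂) (the kernel subbundle of the linear function defined by φ), with inclusion i_V : V → E. Define [[σ,γ]]_V by i_V([[σ,γ]]_V) = [[i_V σ, i_V γ]] and ρ_V(σ) = ρ(i_V σ). Then this is well defined: for sections σ, γ of V, the bracket [[i_V σ, i_V γ]] takes values in V, i.e., φ([[i_V σ, i_V γ]]) = 0, and ([[·,·]]_V, ρ_V) is a skew-symmetric algebroid structure on V. -/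
section RestrictBracket

variable {R E : Type*} [CommRing R] [AddCommGroup E] [Module R E]
  (bracket : E → E → E) (V : Submodule R E)
  (hV : ∀ ⦃σ γ : E⦄, σ ∈ V → γ ∈ V → bracket σ γ ∈ V)

def restrictBracket (σ γ : V) : V :=
  ⟨bracket σ γ, hV σ.2 γ.2⟩

@[simp]
theorem coe_restrictBracket (σ γ : V) :
    (restrictBracket bracket V hV σ γ : E) = bracket σ γ :=
  rfl

theorem restrictBracket_skew (hskew : ∀ σ γ : E, bracket σ γ = - bracket γ σ) (σ γ : V) :
    restrictBracket bracket V hV σ γ = - restrictBracket bracket V hV γ σ :=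
  Subtype.ext (hskew σ γ)

theorem restrictBracket_add_left
    (hadd_left : ∀ σ₁ σ₂ γ : E, bracket (σ₁ + σ₂) γ = bracket σ₁ γ + bracket σ₂ γ)
    (σ₁ σ₂ γ : V) :
    restrictBracket bracket V hV (σ₁ + σ₂) γ =
      restrictBracket bracket V hV σ₁ γ + restrictBracket bracket V hV σ₂ γ :=
  Subtype.ext (hadd_left σ₁ σ₂ γ)

theorem restrictBracket_smul_left {S : Type*} [SMul S R] [SMul S E] [IsScalarTower S R E]
    (hsmul_left : ∀ (c : S) (σ γ : E), bracket (c • σ) γ = c • bracket σ γ)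
    (c : S) (σ γ : V) :
    restrictBracket bracket V hV (c • σ) γ = c • restrictBracket bracket V hV σ γ :=
  Subtype.ext (hsmul_left c σ γ)

theorem restrictBracket_leibniz (anchor : E → R → R)
    (hleibniz : ∀ (σ γ : E) (f : R), bracket σ (f • γ) = f • bracket σ γ + anchor σ f • γ)
    (σ γ : V) (f : R) :
    restrictBracket bracket V hV σ (f • γ) =
      f • restrictBracket bracket V hV σ γ + anchor σ f • γ :=
  Subtype.ext (hleibniz σ γ f)

end RestrictBracket

/-- On sections of `ker φ` the first two terms of the cocycle identity are derivatives of
the constant `0`, so they vanish. -/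
theorem bracket_mem_ker_of_cocycle {R E : Type*} [CommRing R] [Algebra ℝ R] [AddCommGroup E]
    [Module R E] {bracket : E → E → E} {anchor : E → Derivation ℝ R R} {φ : E →ₗ[R] R}
    (hcocycle : ∀ σ γ : E, anchor σ (φ γ) - anchor γ (φ σ) - φ (bracket σ γ) = 0)
    {σ γ : E} (hσ : σ ∈ LinearMap.ker φ) (hγ : γ ∈ LinearMap.ker φ) :
    bracket σ γ ∈ LinearMap.ker φ := by
  have h := hcocycle σ γ
  rw [LinearMap.mem_ker] at hσ hγ ⊢
  rwa [hσ, hγ, map_zero, map_zero, sub_zero, zero_sub, neg_eq_zero] at h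

theorem kernel_subalgebroid_general
    {R : Type*} [CommRing R] [Algebra ℝ R]
    {E : Type*} [AddCommGroup E] [Module ℝ E] [Module R E] [IsScalarTower ℝ R E]
    (bracket : E → E → E) (anchor : E →ₗ[R] Derivation ℝ R R)
    (hadd_left : ∀ σ₁ σ₂ γ : E, bracket (σ₁ + σ₂) γ = bracket σ₁ γ + bracket σ₂ γ)
    (hsmul_left : ∀ (c : ℝ) (σ γ : E), bracket (c • σ) γ = c • bracket σ γ)
    (hskew : ∀ σ γ : E, bracket σ γ = - bracket γ σ)
    (hleibniz : ∀ (σ γ : E) (f : R),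
      bracket σ (f • γ) = f • bracket σ γ + anchor σ f • γ)
    (φ : E →ₗ[R] R)
    (hcocycle : ∀ σ γ : E,
      anchor σ (φ γ) - anchor γ (φ σ) - φ (bracket σ γ) = 0) :
    -- brackets of sections of `V = ker φ̂` lie in `V` ...
    (∀ σ γ : LinearMap.ker φ, φ (bracket (σ : E) (γ : E)) = 0) ∧
    (∃ LbV : LinearMap.ker φ → LinearMap.ker φ → LinearMap.ker φ,
      (∀ σ γ : LinearMap.ker φ, (LbV σ γ : E) = bracket (σ : E) (γ : E)) ∧
      (∀ σ γ, LbV σ γ = - LbV γ σ) ∧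
      (∀ σ₁ σ₂ γ, LbV (σ₁ + σ₂) γ = LbV σ₁ γ + LbV σ₂ γ) ∧
      (∀ (c : ℝ) (σ γ), LbV (c • σ) γ = c • LbV σ γ) ∧
      (∀ (σ γ : LinearMap.ker φ) (f : R),
        LbV σ (f • γ) = f • LbV σ γ + anchor (σ : E) f • γ)) := by
  have hker : ∀ ⦃σ γ : E⦄, σ ∈ LinearMap.ker φ → γ ∈ LinearMap.ker φ →
      bracket σ γ ∈ LinearMap.ker φ :=
    fun _ _ ↦ bracket_mem_ker_of_cocycle (anchor := anchor) hcocycle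
  exact ⟨fun σ γ ↦ hker σ.2 γ.2, restrictBracket bracket _ hker,
    coe_restrictBracket bracket _ hker,
    restrictBracket_skew bracket _ hker hskew,
    restrictBracket_add_left bracket _ hker hadd_left,
    restrictBracket_smul_left bracket _ hker hsmul_left,
    restrictBracket_leibniz bracket _ hker (fun σ f ↦ anchor σ f) hleibniz⟩

/-- Let `(E, [[·,·]], ρ)` be a skew-symmetric algebroid (algebraic model)
with a 1-cocycle `φ ∈ Γ(E*)` which is nowhere zero on the fibres (algebraically:
`φ` is surjective).  Then the kernel subbundle `V = ker φ̂` inherits a well-defined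
skew-symmetric algebroid structure: the bracket of two sections of `V` again lies in `V`
(i.e. `φ([[i_V σ, i_V γ]]) = 0`), and the induced bracket together with
`ρ_V = ρ ∘ i_V` is skew-symmetric, ℝ-bilinear and satisfies the Leibniz rule. -/
theorem kernel_subalgebroid
    {R : Type*} [CommRing R] [Algebra ℝ R]
    {E : Type*} [AddCommGroup E] [Module ℝ E] [Module R E] [IsScalarTower ℝ R E]
    (bracket : E → E → E) (anchor : E →ₗ[R] Derivation ℝ R R)
    (hadd_left : ∀ σ₁ σ₂ γ : E, bracket (σ₁ + σ₂) γ = bracket σ₁ γ + bracket σ₂ γ)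
    (hsmul_left : ∀ (c : ℝ) (σ γ : E), bracket (c • σ) γ = c • bracket σ γ)
    (hskew : ∀ σ γ : E, bracket σ γ = - bracket γ σ)
    (hleibniz : ∀ (σ γ : E) (f : R),
      bracket σ (f • γ) = f • bracket σ γ + anchor σ f • γ)
    (φ : E →ₗ[R] R)
    (hcocycle : ∀ σ γ : E,
      anchor σ (φ γ) - anchor γ (φ σ) - φ (bracket σ γ) = 0)
    (hφ : Function.Surjective φ) :
    -- brackets of sections of `V = ker φ̂` lie in `V` ...
    (∀ σ γ : LinearMap.ker φ, φ (bracket (σ : E) (γ : E)) = 0) ∧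
    (∃ LbV : LinearMap.ker φ → LinearMap.ker φ → LinearMap.ker φ,
      (∀ σ γ : LinearMap.ker φ, (LbV σ γ : E) = bracket (σ : E) (γ : E)) ∧
      (∀ σ γ, LbV σ γ = - LbV γ σ) ∧
      (∀ σ₁ σ₂ γ, LbV (σ₁ + σ₂) γ = LbV σ₁ γ + LbV σ₂ γ) ∧
      (∀ (c : ℝ) (σ γ), LbV (c • σ) γ = c • LbV σ γ) ∧
      (∀ (σ γ : LinearMap.ker φ) (f : R),
        LbV σ (f • γ) = f • LbV σ γ + anchor (σ : E) f • γ)) :=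
  kernel_subalgebroid_general bracket anchor hadd_left hsmul_left hskew hleibniz φ hcocycle
end

section
/- Let (Q, 𝒢) be a Riemannian manifold with Levi-Civita connection ∇, and let X be a vector field on Q with associated 1-form α = 𝒢(X, ·). Let H : T*Q → ℝ be the kinetic-energy Hamiltonian H(η) = ½ 𝒢*(η, η). Then for every vector field Y on Q: dα(X, Y) + Y(H ∘ α) = 𝒢(∇_X X, Y). Consequently, the Hamilton–Jacobi equation i_X dα + d(H ∘ α) = 0 holds if and only if X is auto-parallel, ∇_X X = 0. -/
/-! By metricity `Y(𝒢(X,X)) = 2 𝒢(∇_Y X, X)` and `X(𝒢(X,Y)) = 𝒢(∇_X X, Y) + 𝒢(X, ∇_X Y)`, while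
torsion-freeness gives `𝒢(X,[X,Y]) = 𝒢(X, ∇_X Y) - 𝒢(X, ∇_Y X)`; summing, everything but
`𝒢(∇_X X, Y)` cancels. Nondegeneracy of `𝒢` then turns the Hamilton–Jacobi equation into
`∇_X X = 0`. -/

lemma half_smul_add_self {M : Type*} [AddCommMonoid M] [Module ℝ M] (a : M) :
    (1 / 2 : ℝ) • (a + a) = a := by
  rw [← two_smul ℝ, smul_smul]
  norm_num

section LeviCivita

variable {R : Type*} [CommRing R] [Algebra ℝ R] {L : Type*} [AddCommGroup L] [Module R L]

lemma exteriorDeriv_add_half_anchor_metric_self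
    (lb : L → L → L) (anchor : L →ₗ[R] Derivation ℝ R R) (𝒢 : L →ₗ[R] L →ₗ[R] R)
    (hGsymm : ∀ X Y : L, 𝒢 X Y = 𝒢 Y X) (nabla : L → L → L)
    (htorsion : ∀ X Y : L, lb X Y = nabla X Y - nabla Y X)
    (hmetric : ∀ X Y Z : L, anchor X (𝒢 Y Z) = 𝒢 (nabla X Y) Z + 𝒢 Y (nabla X Z))
    (X Y : L) :
    (anchor X (𝒢 X Y) - anchor Y (𝒢 X X) - 𝒢 X (lb X Y)) + anchor Y ((1 / 2 : ℝ) • 𝒢 X X)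
      = 𝒢 (nabla X X) Y := by
  rw [Derivation.map_smul, htorsion X Y, map_sub, hmetric X X Y, hmetric Y X X,
    hGsymm (nabla Y X) X, half_smul_add_self]
  ring

end LeviCivita

theorem HJ_iff_autoparallel_general
    {R : Type*} [CommRing R] [Algebra ℝ R]
    {L : Type*} [AddCommGroup L] [Module R L]
    (lb : L → L → L) (anchor : L →ₗ[R] Derivation ℝ R R)
    -- the Riemannian metric
    (𝒢 : L →ₗ[R] L →ₗ[R] R)
    (hGsymm : ∀ X Y : L, 𝒢 X Y = 𝒢 Y X)
    (hGnondeg : ∀ Z : L, (∀ Y : L, 𝒢 Z Y = 0) → Z = 0)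
    -- the Levi-Civita connection
    (nabla : L → L → L)
    (htorsion : ∀ X Y : L, lb X Y = nabla X Y - nabla Y X)
    (hmetric : ∀ X Y Z : L,
      anchor X (𝒢 Y Z) = 𝒢 (nabla X Y) Z + 𝒢 Y (nabla X Z))
    (X : L) :
    -- the key identity `dα(X,Y) + Y(H ∘ α) = 𝒢(∇_X X, Y)` with `α = 𝒢(X, ·)`
    (∀ Y : L,
      (anchor X (𝒢 X Y) - anchor Y (𝒢 X X) - 𝒢 X (lb X Y))
        + anchor Y ((1/2 : ℝ) • 𝒢 X X)
        = 𝒢 (nabla X X) Y) ∧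
    -- the Hamilton–Jacobi equation holds iff `X` is auto-parallel
    ((∀ Y : L,
      (anchor X (𝒢 X Y) - anchor Y (𝒢 X X) - 𝒢 X (lb X Y))
        + anchor Y ((1/2 : ℝ) • 𝒢 X X) = 0)
      ↔ nabla X X = 0) := by
  have key := exteriorDeriv_add_half_anchor_metric_self lb anchor 𝒢 hGsymm nabla htorsion
    hmetric X
  refine ⟨key, fun hHJ ↦ hGnondeg _ fun Y ↦ (key Y).symm.trans (hHJ Y), fun hauto Y ↦ ?_⟩
  rw [key Y, hauto, map_zero, LinearMap.zero_apply]

/-- (Algebraic model of a Riemannian manifold: `R = C^∞(Q)`, `L = 𝔛(Q)`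
with its Lie bracket `lb` and action `anchor` on functions, `𝒢` the metric — a symmetric
nondegenerate `R`-bilinear form — and `∇` the Levi-Civita connection, characterized by
symmetry and metricity.)  For a vector field `X` with associated 1-form `α = 𝒢(X,·)` and
the kinetic Hamiltonian, one has for every `Y`
`dα(X,Y) + Y(H∘α) = 𝒢(∇_X X, Y)`, where `(H∘α) = ½𝒢(X,X)` and
`dα(X,Y) = X(α(Y)) − Y(α(X)) − α([X,Y])`.  Consequently the Hamilton–Jacobi equation
`i_X dα + d(H∘α) = 0` holds iff `X` is auto-parallel: `∇_X X = 0`. -/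
theorem HJ_iff_autoparallel
    {R : Type*} [CommRing R] [Algebra ℝ R]
    {L : Type*} [AddCommGroup L] [Module ℝ L] [Module R L] [IsScalarTower ℝ R L]
    (lb : L → L → L) (anchor : L →ₗ[R] Derivation ℝ R R)
    (hskew : ∀ X Y : L, lb X Y = - lb Y X)
    (hleibniz : ∀ (X Y : L) (f : R), lb X (f • Y) = f • lb X Y + anchor X f • Y)
    -- the Riemannian metric
    (𝒢 : L →ₗ[R] L →ₗ[R] R)
    (hGsymm : ∀ X Y : L, 𝒢 X Y = 𝒢 Y X)
    (hGnondeg : ∀ Z : L, (∀ Y : L, 𝒢 Z Y = 0) → Z = 0)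
    -- the Levi-Civita connection
    (nabla : L → L → L)
    (htorsion : ∀ X Y : L, lb X Y = nabla X Y - nabla Y X)
    (hmetric : ∀ X Y Z : L,
      anchor X (𝒢 Y Z) = 𝒢 (nabla X Y) Z + 𝒢 Y (nabla X Z))
    (X : L) :
    -- the key identity `dα(X,Y) + Y(H ∘ α) = 𝒢(∇_X X, Y)` with `α = 𝒢(X, ·)`
    (∀ Y : L,
      (anchor X (𝒢 X Y) - anchor Y (𝒢 X X) - 𝒢 X (lb X Y))
        + anchor Y ((1/2 : ℝ) • 𝒢 X X)
        = 𝒢 (nabla X X) Y) ∧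
    -- the Hamilton–Jacobi equation holds iff `X` is auto-parallel
    ((∀ Y : L,
      (anchor X (𝒢 X Y) - anchor Y (𝒢 X X) - 𝒢 X (lb X Y))
        + anchor Y ((1/2 : ℝ) • 𝒢 X X) = 0)
      ↔ nabla X X = 0) :=
  HJ_iff_autoparallel_general lb anchor 𝒢 hGsymm hGnondeg nabla htorsion hmetric X
end

section
/- Let (E, [[·,·]]_E, ρ, φ, h) and (Ē, [[·,·]]_Ē, ρ̄, φ̄, h̄) be Hamiltonian systems on skew-symmetric algebroids and (Ψ, ψ) a hamiltonian morphism between E* and Ē*. Then the induced map Ψ̂ : V* → V̄* between the quotient bundles satisfies T Ψ̂ ∘ R_h = R_{h̄} ∘ Ψ̂, i.e., the hamiltonian vector fields R_h and R_{h̄} are Ψ̂-related. -/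
/-- (Model: finite-dimensional almost Poisson manifolds, working in
charts/total spaces of the dual bundles, as suggested by the paper.)  `M`, `N` play the
role of the total spaces `E*`, `Ē*`, carrying almost Poisson brackets `BM`, `BN`;
`VM`, `VN` play the role of `V*`, `V̄*`, with the AV-bundle projections `μM`, `μN`.
`Ψ` is a hamiltonian morphism: an almost Poisson morphism with `F_{h̄} ∘ Ψ = F_h`,
covering the map `Ψ̂` between the quotients.  The hamiltonian vector fields `R_h`,
`R_{h̄}` are characterized by `R_h(G) ∘ μ = {G ∘ μ, F_h}`.  Then `R_h` and `R_{h̄}`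
are `Ψ̂`-related: `T Ψ̂ ∘ R_h = R_{h̄} ∘ Ψ̂`. -/
theorem hamiltonian_morphism_relates_hamiltonian_vector_fields
    {M : Type*} [NormedAddCommGroup M] [NormedSpace ℝ M]
    {N : Type*} [NormedAddCommGroup N] [NormedSpace ℝ N]
    {VM : Type*} [NormedAddCommGroup VM] [NormedSpace ℝ VM]
    {VN : Type*} [NormedAddCommGroup VN] [NormedSpace ℝ VN]
    -- the almost Poisson brackets on `C^∞(E*)` and `C^∞(Ē*)`
    (BM : (M → ℝ) → (M → ℝ) → (M → ℝ)) (BN : (N → ℝ) → (N → ℝ) → (N → ℝ))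
    -- the AV-bundle projections `μ : E* → V*`, `μ̄ : Ē* → V̄*`
    (μM : M → VM) (μN : N → VN)
    (hμM : ContDiff ℝ (⊤ : ℕ∞) μM) (hμMsurj : Function.Surjective μM)
    (hμN : ContDiff ℝ (⊤ : ℕ∞) μN)
    -- the morphism `Ψ` and the induced map `Ψ̂` on the quotients
    (Ψ : M → N) (hΨ : ContDiff ℝ (⊤ : ℕ∞) Ψ)
    (Ψhat : VM → VN) (hΨhat : ContDiff ℝ (⊤ : ℕ∞) Ψhat)
    (hcomm : μN ∘ Ψ = Ψhat ∘ μM)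
    -- `Ψ` is an almost Poisson morphism
    (hPoisson : ∀ G₁ G₂ : N → ℝ, ContDiff ℝ (⊤ : ℕ∞) G₁ → ContDiff ℝ (⊤ : ℕ∞) G₂ →
      BM (G₁ ∘ Ψ) (G₂ ∘ Ψ) = (BN G₁ G₂) ∘ Ψ)
    -- the hamiltonian sections: `F_{h̄} ∘ Ψ = F_h`
    (FM : M → ℝ) (FN : N → ℝ) (hFM : ContDiff ℝ (⊤ : ℕ∞) FM) (hFN : ContDiff ℝ (⊤ : ℕ∞) FN)
    (hF : FN ∘ Ψ = FM)
    -- the hamiltonian vector fields `R_h`, `R_{h̄}`,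
    -- characterized by `R_h(G) ∘ μ = {G ∘ μ, F_h}`
    (Rh : VM → VM)
    (hRh : ∀ G : VM → ℝ, ContDiff ℝ (⊤ : ℕ∞) G →
      (fun m => fderiv ℝ G (μM m) (Rh (μM m))) = BM (G ∘ μM) FM)
    (Rhbar : VN → VN)
    (hRhbar : ∀ G : VN → ℝ, ContDiff ℝ (⊤ : ℕ∞) G →
      (fun x => fderiv ℝ G (μN x) (Rhbar (μN x))) = BN (G ∘ μN) FN) :
    -- `T Ψ̂ ∘ R_h = R_{h̄} ∘ Ψ̂`
    ∀ v : VM, fderiv ℝ Ψhat v (Rh v) = Rhbar (Ψhat v) := by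
  intro v
  obtain ⟨m, rfl⟩ := hμMsurj v
  rw [NormedSpace.eq_iff_forall_dual_eq ℝ]
  intro g
  -- apply hRh to G := g ∘ Ψhat
  have hG : ContDiff ℝ (⊤ : ℕ∞) (⇑g ∘ Ψhat) := g.contDiff.comp hΨhat
  have h1 := congrFun (hRh (⇑g ∘ Ψhat) hG) m
  have h2 := congrFun (hRhbar ⇑g g.contDiff) (Ψ m)
  have hgN : ContDiff ℝ (⊤ : ℕ∞) (⇑g ∘ μN) := g.contDiff.comp hμN
  have h3 := congrFun (hPoisson (⇑g ∘ μN) FN hgN hFN) m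
  -- chain rule for fderiv of g ∘ Ψhat
  have hchain : fderiv ℝ (⇑g ∘ Ψhat) (μM m) =
      g.comp (fderiv ℝ Ψhat (μM m)) := by
    rw [fderiv_comp _ (g.differentiable.differentiableAt)
      ((hΨhat.differentiable (by simp)).differentiableAt), g.fderiv]
  rw [hchain] at h1
  rw [g.fderiv] at h2
  have hcm : Ψhat (μM m) = μN (Ψ m) := (congrFun hcomm m).symm
  have hgc : (⇑g ∘ Ψhat) ∘ μM = (⇑g ∘ μN) ∘ Ψ := by
    ext x
    exact congrArg g (congrFun hcomm x).symm
  calc g (fderiv ℝ Ψhat (μM m) (Rh (μM m)))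
      = BM ((⇑g ∘ Ψhat) ∘ μM) FM m := h1
    _ = BM ((⇑g ∘ μN) ∘ Ψ) (FN ∘ Ψ) m := by rw [hgc, hF]
    _ = BN (⇑g ∘ μN) FN (Ψ m) := h3
    _ = g (Rhbar (μN (Ψ m))) := h2.symm
    _ = g (Rhbar (Ψhat (μM m))) := by rw [hcm]
end
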